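/- arXiv:2011.06311 — 3 statements merged into one kernel-verified Lean document; each statement's English description precedes it below -/
import Mathlib

section
/- For every u ∈ k^*, one has β_u ∘ Δ ∘ β_u^{-1} = u^7 Δ as derivations on k[x1,x2,x3]; consequently β_v ∘ φ_u ∘ β_v^{-1} = φ_{u v^7} for all u, v ∈ k^*. -/
open MvPolynomial

noncomputable section

namespace YasudaPaper

variable {k : Type*} [Field k]

/-- `f := x1*x3 - x2^2` (variables: `X 0 = x1, X 1 = x2, X 2 = x3`). -/
def fP : MvPolynomial (Fin 3) k := X 0 * X 2 - X 1 ^ 2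

/-- `r := x2*f + x1^2`. -/
def rP : MvPolynomial (Fin 3) k := X 1 * fP + X 0 ^ 2

/-- `g := x3*f^2 + 2*x1*x2*f + x1^3`. -/
def gP : MvPolynomial (Fin 3) k := X 2 * fP ^ 2 + 2 * X 0 * X 1 * fP + X 0 ^ 3

/-- The Jacobian derivation `Δ = Δ_{(f,g)}`, `h ↦ det ∂(f,g,h)/∂(x1,x2,x3)`. -/
def Del (h : MvPolynomial (Fin 3) k) : MvPolynomial (Fin 3) k :=
  Matrix.det !![pderiv 0 fP, pderiv 1 fP, pderiv 2 fP;
                pderiv 0 gP, pderiv 1 gP, pderiv 2 gP;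
                pderiv 0 h,  pderiv 1 h,  pderiv 2 h]

/-- `φ = exp D`: for every `h` and every `N` with `D^[N] h = 0`,
    `φ h = ∑_{i<N} D^i(h)/i!`.  (For a locally nilpotent `D` this characterizes
    the exponential automorphism.) -/
def IsExpOf {σ : Type*} (D : MvPolynomial σ k → MvPolynomial σ k)
    (φ : MvPolynomial σ k ≃ₐ[k] MvPolynomial σ k) : Prop :=
  ∀ (h : MvPolynomial σ k) (N : ℕ), D^[N] h = 0 →
    φ h = ∑ i ∈ Finset.range N, (Nat.factorial i : k)⁻¹ • D^[i] h

/-- `α` is an affine automorphism: `α(x_i) = ∑_j a_{j,i} x_j + b_i` with `A ∈ GL₃(k)`. -/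
def IsAffine (α : MvPolynomial (Fin 3) k ≃ₐ[k] MvPolynomial (Fin 3) k) : Prop :=
  ∃ (A : Matrix (Fin 3) (Fin 3) k) (b : Fin 3 → k), IsUnit A.det ∧
    ∀ i : Fin 3, α (X i) = (∑ j : Fin 3, C (A j i) * X j) + C (b i)

/-- `Aff_3(k)` as a set of automorphisms. -/
def AffSet : Set (MvPolynomial (Fin 3) k ≃ₐ[k] MvPolynomial (Fin 3) k) := {α | IsAffine α}

/-- `α` is a triangular automorphism: `α(x_i) = a_i x_i + f_i(x_1,…,x_{i-1})`, `a_i ≠ 0`. -/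
def IsTriangular (α : MvPolynomial (Fin 3) k ≃ₐ[k] MvPolynomial (Fin 3) k) : Prop :=
  ∃ (a : Fin 3 → k) (p : Fin 3 → MvPolynomial (Fin 3) k),
    (∀ i, a i ≠ 0) ∧ (∀ i, p i ∈ MvPolynomial.supported k {j | j < i}) ∧
    (∀ i, α (X i) = C (a i) * X i + p i)

/-- `BA_3(k)` as a set of automorphisms. -/
def TriSet : Set (MvPolynomial (Fin 3) k ≃ₐ[k] MvPolynomial (Fin 3) k) := {α | IsTriangular α}

/-- The tame subgroup `TA_3(k) = ⟨Aff_3(k), BA_3(k)⟩`. -/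
def TA : Subgroup (MvPolynomial (Fin 3) k ≃ₐ[k] MvPolynomial (Fin 3) k) :=
  Subgroup.closure (AffSet ∪ TriSet)

/-- `β = β_u = (u^3 x1, u^2 x2, u x3)`. -/
def IsBeta (u : k) (β : MvPolynomial (Fin 3) k ≃ₐ[k] MvPolynomial (Fin 3) k) : Prop :=
  β (X 0) = C (u ^ 3) * X 0 ∧ β (X 1) = C (u ^ 2) * X 1 ∧ β (X 2) = C u * X 2

/-- `B = {β_u | u ∈ k^*}`. -/
def BSet : Set (MvPolynomial (Fin 3) k ≃ₐ[k] MvPolynomial (Fin 3) k) :=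
  {β | ∃ u : k, u ≠ 0 ∧ IsBeta u β}

/-! Six-variable ring `k[x1,x2,x3,t_r,t_f,t_g]`:
variables `X 0 = x1, X 1 = x2, X 2 = x3, X 3 = t_r, X 4 = t_f, X 5 = t_g`. -/

/-- The inclusion of variable index sets. -/
def ι36 : Fin 3 → Fin 6 := Fin.castLE (by norm_num)

/-- The embedding `k[x1,x2,x3] → k[x1,x2,x3,t_r,t_f,t_g]`. -/
def embP : MvPolynomial (Fin 3) k →ₐ[k] MvPolynomial (Fin 6) k := rename ι36

/-- The substitution map `π : t_r ↦ r, t_f ↦ f, t_g ↦ g` (fixing `x1,x2,x3`). -/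
def piMap : MvPolynomial (Fin 6) k →ₐ[k] MvPolynomial (Fin 3) k :=
  aeval ![X 0, X 1, X 2, rP, fP, gP]

/-- The triangular derivation
`Δ' = -2 t_r t_f ∂/∂x1 + (4 x1 t_r - t_g) ∂/∂x2 + (6 x2 t_r + 2 t_f²) ∂/∂x3 - t_f t_g ∂/∂t_r`. -/
def Del' (p : MvPolynomial (Fin 6) k) : MvPolynomial (Fin 6) k :=
  (-(2 * X 3 * X 4)) * pderiv 0 p + (4 * X 0 * X 3 - X 5) * pderiv 1 p +
  (6 * X 1 * X 3 + 2 * X 4 ^ 2) * pderiv 2 p + (-(X 4 * X 5)) * pderiv 3 p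

/-- The weight `w1 = (1,2,3,1,0,1)`. -/
def w1 : Fin 6 → ℕ := ![1, 2, 3, 1, 0, 1]

/-- The weight `w2 = (0,0,0,0,1,0)`. -/
def w2 : Fin 6 → ℕ := ![0, 0, 0, 0, 1, 0]

/-- The sixth cyclic lexicographic order on exponent vectors: first compare the
exponent of `t_g`, then lexicographically the exponents of `x1,x2,x3,t_r,t_f`. -/
def cyclicLt (a b : Fin 6 →₀ ℕ) : Prop :=
  a 5 < b 5 ∨ (a 5 = b 5 ∧ ∃ m : Fin 5,
    (∀ l : Fin 5, l < m → a l.castSucc = b l.castSucc) ∧ a m.castSucc < b m.castSucc)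

/-- The leading monomial of `p` (for the sixth cyclic lexicographic order) is `m`. -/
def LeadMonIs (p : MvPolynomial (Fin 6) k) (m : Fin 6 →₀ ℕ) : Prop :=
  m ∈ p.support ∧ ∀ m' ∈ p.support, m' ≠ m → cyclicLt m' m

/-- The exponent vector of the monomial `t_f^δ t_g^γ`. -/
def tfMon (γ δ : ℕ) : Fin 6 →₀ ℕ := Finsupp.single 4 δ + Finsupp.single 5 γ

/-- The set `P_{γ,δ}`. -/
def Pset (γ δ : ℕ) : Set (MvPolynomial (Fin 6) k) :=
  {p | p ≠ 0 ∧ weightedTotalDegree w1 p ≤ γ ∧ weightedTotalDegree w2 p ≤ δ ∧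
    LeadMonIs p (tfMon γ δ)}

/-- `α'` is a lift of `α`. -/
def IsLift (α : MvPolynomial (Fin 3) k ≃ₐ[k] MvPolynomial (Fin 3) k)
    (α' : MvPolynomial (Fin 6) k →ₐ[k] MvPolynomial (Fin 6) k) : Prop :=
  (∀ i : Fin 3, α' (X (ι36 i)) = embP (α (X i))) ∧
  (∀ p, piMap (α' p) = α (piMap p))

/-- `t = γ_j = max {i | a_{i,j} ≠ 0}` (with rows indexed `1,2,3`). -/
def TypeIs (A : Matrix (Fin 3) (Fin 3) k) (j : Fin 3) (t : ℕ) : Prop :=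
  ∃ i : Fin 3, t = (i : ℕ) + 1 ∧ A i j ≠ 0 ∧ ∀ i' : Fin 3, i < i' → A i' j = 0

/-- Condition (C) for a lift `α'` of an affine automorphism of type `(γ1,γ2,γ3)`,
relative to `φ' = exp(uΔ')`. -/
def CondC (γ1 γ2 γ3 : ℕ) (φ' : MvPolynomial (Fin 6) k ≃ₐ[k] MvPolynomial (Fin 6) k)
    (α' : MvPolynomial (Fin 6) k →ₐ[k] MvPolynomial (Fin 6) k) : Prop :=
  ∃ m4 m5 m6 n4 n5 n6 : ℕ,
    1 ≤ n4 ∧ 1 ≤ n5 ∧ 1 ≤ n6 ∧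
    φ' (α' (X 3)) ∈ Pset m4 n4 ∧
    φ' (α' (X 4)) ∈ Pset m5 n5 ∧
    φ' (α' (X 5)) ∈ Pset m6 n6 ∧
    γ1 ≤ m6 ∧ γ2 ≤ 2 * m6 ∧ γ3 ≤ 3 * m6 ∧ m4 ≤ m6 ∧
    γ1 + 1 ≤ n6 - 1 ∧ γ2 + 1 ≤ 2 * (n6 - 1) ∧ γ3 + 1 ≤ 3 * (n6 - 1) ∧ n4 ≤ n6 - 1

/-- The image of `x_j` under the affine map given by `(A, d)`, inside the six-variable ring. -/
def affImg (A : Matrix (Fin 3) (Fin 3) k) (d : Fin 3 → k) (j : Fin 3) :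
    MvPolynomial (Fin 6) k :=
  (∑ i : Fin 3, C (A i j) * X (ι36 i)) + C (d j)

/-- The image of `t_f` under the lift `α̂`:
`α̂(t_f) = α(f) + (a_{1,1}a_{3,3} - 2a_{1,2}a_{3,2} + a_{1,3}a_{3,1})(t_f - f)`. -/
def hatTf (A : Matrix (Fin 3) (Fin 3) k) (d : Fin 3 → k) : MvPolynomial (Fin 6) k :=
  (affImg A d 0 * affImg A d 2 - affImg A d 1 ^ 2) +
    C (A 0 0 * A 2 2 - 2 * (A 0 1 * A 2 1) + A 0 2 * A 2 0) *
      (X 4 - (X 0 * X 2 - X 1 ^ 2))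

/-- The lift `α̂` of the affine automorphism given by `(A, d)`:
`α̂(x_i) = α(x_i)`, `α̂(t_f)` as in `hatTf`, `α̂(t_r) = α̂(x2 t_f + x1²)`,
`α̂(t_g) = α̂(x3 t_f² + 2 x1 x2 t_f + x1³)`. -/
def hatLift (A : Matrix (Fin 3) (Fin 3) k) (d : Fin 3 → k) :
    MvPolynomial (Fin 6) k →ₐ[k] MvPolynomial (Fin 6) k :=
  aeval ![affImg A d 0, affImg A d 1, affImg A d 2,
    affImg A d 1 * hatTf A d + affImg A d 0 ^ 2,
    hatTf A d,
    affImg A d 2 * hatTf A d ^ 2 + 2 * affImg A d 0 * affImg A d 1 * hatTf A d +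
      affImg A d 0 ^ 3]

/-! With weights 3, 2, 1 on x1, x2, x3, the polynomials f and g are homogeneous of degrees
4 and 9, so `β_u` scales them by `u^4` and `u^9`, and the Jacobian derivation `Δ` raises the
weighted degree by `4 + 9 - (3 + 2 + 1) = 7`: `β_u ∘ Δ = u^7 • Δ ∘ β_u`. Both sides are
`β_u`-twisted derivations, so this needs checking only on the variables. Conjugating powers gives
`β_v ∘ Δ^n ∘ β_v⁻¹ = v^(7n) • Δ^n`, and the exponential series of `uΔ` and `uv^7Δ` then agree
term by term. -/

theorem _root_.Derivation.map_ofNat {R A M : Type*} [CommSemiring R] [CommSemiring A]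
    [Algebra R A] [AddCommMonoid M] [Module A M] [Module R M] (D : Derivation R A M) (n : ℕ)
    [n.AtLeastTwo] :
    D (ofNat(n) : A) = 0 :=
  D.map_natCast n

theorem _root_.Derivation.map_comp_eq_smul_comp_of_X {R σ F : Type*} [CommRing R]
    (D : Derivation R (MvPolynomial σ R) (MvPolynomial σ R))
    [FunLike F (MvPolynomial σ R) (MvPolynomial σ R)]
    [AlgHomClass F R (MvPolynomial σ R) (MvPolynomial σ R)] (β : F) (c : R)
    (hX : ∀ i, β (D (X i)) = c • D (β (X i))) (p : MvPolynomial σ R) :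
    β (D p) = c • D (β p) := by
  induction p using MvPolynomial.induction_on with
  | C a =>
    simp only [← algebraMap_eq, D.map_algebraMap, map_zero, AlgHomClass.commutes, smul_zero]
  | add p q hp hq => simp only [map_add, hp, hq, smul_add]
  | mul_X p i hp =>
    simp only [Derivation.leibniz, smul_eq_mul, map_add, map_mul, hp, hX, mul_smul_comm,
      smul_add]

theorem IsExpOf.map_eq_of_map_comp_eq_smul_comp {σ : Type*} {D : Module.End k (MvPolynomial σ k)}
    {β : MvPolynomial σ k ≃ₐ[k] MvPolynomial σ k} {c : k} (hc : c ≠ 0)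
    (hβD : ∀ p, β (D p) = c • D (β p)) {a : k} {φ ψ : MvPolynomial σ k ≃ₐ[k] MvPolynomial σ k}
    (hφ : IsExpOf ⇑(a • D) φ) (hψ : IsExpOf ⇑((a * c) • D) ψ) {q : MvPolynomial σ k}
    (hq : ∃ N, (D ^ N) q = 0) : β (φ q) = ψ (β q) := by
  obtain ⟨N, hN⟩ := hq
  have hsmul_pow (b : k) (n : ℕ) (p : MvPolynomial σ k) :
      (⇑(b • D))^[n] p = b ^ n • (D ^ n) p := by
    rw [← Module.End.pow_apply, smul_pow, LinearMap.smul_apply]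
  have hβDn (n : ℕ) (p : MvPolynomial σ k) : β ((D ^ n) p) = c ^ n • (D ^ n) (β p) := by
    have hsemi : Function.Semiconj β D ⇑(c • D) := hβD
    rw [Module.End.pow_apply, (hsemi.iterate_right n).eq, hsmul_pow]
  have hβN : (D ^ N) (β q) = 0 := by
    simpa [hN, pow_ne_zero N hc] using (hβDn N q).symm
  rw [hφ q N (by rw [hsmul_pow, hN, smul_zero]),
    hψ (β q) N (by rw [hsmul_pow, hβN, smul_zero]), map_sum]
  refine Finset.sum_congr rfl fun i _ => ?_
  rw [hsmul_pow, hsmul_pow, map_smul, map_smul, hβDn, smul_smul, smul_smul, smul_smul, mul_pow]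
  congr 1
  ring

def delDerivation : Derivation k (MvPolynomial (Fin 3) k) (MvPolynomial (Fin 3) k) :=
  (pderiv 1 (fP (k := k)) * pderiv 2 gP - pderiv 2 fP * pderiv 1 gP) • pderiv 0 +
  (pderiv 2 (fP (k := k)) * pderiv 0 gP - pderiv 0 fP * pderiv 2 gP) • pderiv 1 +
  (pderiv 0 (fP (k := k)) * pderiv 1 gP - pderiv 1 fP * pderiv 0 gP) • pderiv 2

theorem coe_delDerivation : ⇑(delDerivation : Derivation k _ _) = Del := by
  ext1 h
  simp only [delDerivation, Derivation.coe_add, Derivation.coe_smul, Pi.add_apply,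
    Pi.smul_apply, smul_eq_mul, Del, Matrix.det_fin_three, Matrix.of_apply, Matrix.cons_val',
    Matrix.cons_val_zero, Matrix.cons_val_fin_one, Matrix.cons_val_one, Matrix.cons_val]
  ring

theorem IsBeta.map_Del_X {u : k} {β : MvPolynomial (Fin 3) k ≃ₐ[k] MvPolynomial (Fin 3) k}
    (hβ : IsBeta u β) (i : Fin 3) : β (Del (X i)) = u ^ 7 • Del (β (X i)) := by
  obtain ⟨h0, h1, h2⟩ := hβ
  fin_cases i <;>
  · simp only [Del, fP, gP, Matrix.det_fin_three, Matrix.of_apply, Matrix.cons_val',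
      Matrix.cons_val_zero, Matrix.cons_val_fin_one, Matrix.cons_val_one, Matrix.cons_val,
      Fin.isValue, Fin.zero_eta, Fin.mk_one, Fin.reduceFinMk, Fin.reduceEq, ne_eq, one_ne_zero,
      zero_ne_one, not_false_eq_true, map_add, map_sub, map_mul, map_neg, map_pow, map_ofNat,
      Derivation.leibniz, Derivation.leibniz_pow, Derivation.map_ofNat, derivation_C, pderiv_X,
      Pi.single_eq_of_ne, Pi.single_eq_same, h0, h1, h2, smul_eq_mul, nsmul_eq_mul,
      Nat.cast_ofNat, Nat.add_one_sub_one, pow_one, mul_zero, mul_one, zero_add,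
      add_zero, sub_zero, zero_sub, sub_self, mul_neg, neg_mul, smul_neg, smul_add, smul_eq_C_mul]
    ring

theorem IsBeta.map_Del {u : k} {β : MvPolynomial (Fin 3) k ≃ₐ[k] MvPolynomial (Fin 3) k}
    (hβ : IsBeta u β) (p : MvPolynomial (Fin 3) k) : β (Del p) = u ^ 7 • Del (β p) := by
  rw [← coe_delDerivation]
  refine delDerivation.map_comp_eq_smul_comp_of_X β _ (fun i => ?_) p
  simpa only [coe_delDerivation] using hβ.map_Del_X i

theorem statement5_general
    (hln : ∀ h : MvPolynomial (Fin 3) k, ∃ l : ℕ, Del^[l] h = 0) :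
    (∀ u : k, u ≠ 0 →
      ∀ β : MvPolynomial (Fin 3) k ≃ₐ[k] MvPolynomial (Fin 3) k, IsBeta u β →
        ∀ p, β (Del (β.symm p)) = u ^ 7 • Del p) ∧
    (∀ u v : k, u ≠ 0 → v ≠ 0 →
      ∀ β φu φw : MvPolynomial (Fin 3) k ≃ₐ[k] MvPolynomial (Fin 3) k,
        IsBeta v β →
        IsExpOf (fun h => u • Del h) φu →
        IsExpOf (fun h => (u * v ^ 7) • Del h) φw →
        ∀ p, β (φu (β.symm p)) = φw p) := by
  refine ⟨fun u _ β hβ p => by simpa using hβ.map_Del (β.symm p), ?_⟩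
  intro u v _ hv β φu φw hβ hφu hφw p
  let Δ : Module.End k (MvPolynomial (Fin 3) k) := (delDerivation (k := k)).toLinearMap
  have hΔ : ⇑Δ = Del := coe_delDerivation
  have hnil : ∃ N, (Δ ^ N) (β.symm p) = 0 := by
    simpa only [Module.End.pow_apply, hΔ] using hln (β.symm p)
  have key := IsExpOf.map_eq_of_map_comp_eq_smul_comp (pow_ne_zero 7 hv)
    (by simpa only [hΔ] using hβ.map_Del) (by rw [LinearMap.coe_smul, hΔ]; exact hφu)
    (by rw [LinearMap.coe_smul, hΔ]; exact hφw) hnil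
  rwa [β.apply_symm_apply] at key

/-- For every `u ∈ k^*`, `β_u ∘ Δ ∘ β_u⁻¹ = u^7 Δ`;
consequently `β_v ∘ φ_u ∘ β_v⁻¹ = φ_{u v^7}` for all `u, v ∈ k^*`. -/
theorem statement5 [CharZero k]
    (hln : ∀ h : MvPolynomial (Fin 3) k, ∃ l : ℕ, Del^[l] h = 0) :
    (∀ u : k, u ≠ 0 →
      ∀ β : MvPolynomial (Fin 3) k ≃ₐ[k] MvPolynomial (Fin 3) k, IsBeta u β →
        ∀ p, β (Del (β.symm p)) = u ^ 7 • Del p) ∧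
    (∀ u v : k, u ≠ 0 → v ≠ 0 →
      ∀ β φu φw : MvPolynomial (Fin 3) k ≃ₐ[k] MvPolynomial (Fin 3) k,
        IsBeta v β →
        IsExpOf (fun h => u • Del h) φu →
        IsExpOf (fun h => (u * v ^ 7) • Del h) φw →
        ∀ p, β (φu (β.symm p)) = φw p) :=
  statement5_general hln

end YasudaPaper
end
end

section
/- For every u ∈ k^*: φ'_u(t_r) = t_r - u*t_f*t_g, φ'_u(t_f) = t_f, φ'_u(t_g) = t_g, and for each i = 1,2,3 one has φ'_u(x_i) ∈ P_{i, i+1} with leading term lt(φ'_u(x_i)) = (-1)^{i+1} u^{2i} t_f^{i+1} t_g^{i} for the sixth cyclic lexicographic order. -/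
open MvPolynomial

noncomputable section

namespace YasudaPaper

variable {k : Type*} [Field k]

/-!
`Δ'` is triangular, so `exp (uΔ')` can be evaluated on each variable by iterating `Δ'` until it
vanishes: `t_f` and `t_g` are killed at once, `t_r` after one step, and `x₁, x₂, x₃` after
`2, 4, 6` steps, the last nonzero term being `±u^{2i} t_f^{i+1} t_g^i`. All the other monomials
of `φ'_u(x_i)` have smaller `t_g`-exponent and stay within the weight bounds, so that term leads.
-/

/-- The hypotheses give `D^[i] q₀ = i! • qᵢ`, so the factorials of the exponential series cancel. -/
theorem IsExpOf.apply_eq_sum [CharZero k] {σ : Type*} {D : MvPolynomial σ k → MvPolynomial σ k}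
    (hD : ∀ (c : k) p, D (c • p) = c • D p) {u : k} {φ : MvPolynomial σ k ≃ₐ[k] MvPolynomial σ k}
    (hφ : IsExpOf (fun p => u • D p) φ) {N : ℕ} (q : Fin (N + 1) → MvPolynomial σ k)
    (hstep : ∀ i : Fin N, D (q i.castSucc) = ((i : ℕ) + 1) • q i.succ)
    (hlast : D (q (Fin.last N)) = 0) :
    φ (q 0) = ∑ i : Fin (N + 1), u ^ (i : ℕ) • q i := by
  have hiter : ∀ i : Fin (N + 1),
      (fun p => u • D p)^[i] (q 0) = ((i : ℕ).factorial * u ^ (i : ℕ) : k) • q i := by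
    intro i
    induction i using Fin.induction with
    | zero => simp
    | succ i ih =>
      rw [Fin.val_succ, Function.iterate_succ_apply', ← Fin.val_castSucc, ih, hD, hstep,
        ← Nat.cast_smul_eq_nsmul k, smul_smul, smul_smul, Fin.val_castSucc, Nat.factorial_succ]
      congr 1
      push_cast
      ring
  have hnil : (fun p => u • D p)^[N + 1] (q 0) = 0 := by
    have hN := hiter (Fin.last N)
    rw [Fin.val_last] at hN
    rw [Function.iterate_succ_apply', hN, hD, hlast, smul_zero, smul_zero]
  rw [hφ _ _ hnil, ← Fin.sum_univ_eq_sum_range]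
  refine Finset.sum_congr rfl fun i _ => ?_
  rw [hiter, smul_smul, ← mul_assoc, inv_mul_cancel₀ (by exact_mod_cast i.val.factorial_ne_zero),
    one_mul]

section Orbits

theorem pderiv_ofNat {σ R : Type*} [CommSemiring R] (i : σ) (n : ℕ) [n.AtLeastTwo] :
    pderiv i (no_index (OfNat.ofNat n) : MvPolynomial σ R) = 0 := by
  rw [← map_ofNat (C : R →+* MvPolynomial σ R) n, pderiv_C]

theorem Del'_smul (c : k) (p : MvPolynomial (Fin 6) k) : Del' (c • p) = c • Del' p := by
  simp only [smul_eq_C_mul, Del', pderiv_C_mul]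
  ring

variable [CharZero k] {u : k} {φ' : MvPolynomial (Fin 6) k ≃ₐ[k] MvPolynomial (Fin 6) k}

theorem expDel'_X3 (hφ' : IsExpOf (fun p => u • Del' p) φ') :
    φ' (X 3) = X 3 - C u * (X 4 * X 5) := by
  rw [show (X 3 : MvPolynomial (Fin 6) k) = ![X 3, -(X 4 * X 5)] 0 from rfl,
    hφ'.apply_eq_sum Del'_smul]
  · simp [Fin.sum_univ_succ, smul_eq_C_mul]
    ring
  · intro i
    fin_cases i
    simp [Del', pderiv_X]
  · simp [Del', pderiv_X]

theorem expDel'_X4 (hφ' : IsExpOf (fun p => u • Del' p) φ') : φ' (X 4) = X 4 := by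
  rw [show (X 4 : MvPolynomial (Fin 6) k) = ![X 4] 0 from rfl, hφ'.apply_eq_sum Del'_smul]
  · simp
  · exact finZeroElim
  · simp [Del', pderiv_X]

theorem expDel'_X5 (hφ' : IsExpOf (fun p => u • Del' p) φ') : φ' (X 5) = X 5 := by
  rw [show (X 5 : MvPolynomial (Fin 6) k) = ![X 5] 0 from rfl, hφ'.apply_eq_sum Del'_smul]
  · simp
  · exact finZeroElim
  · simp [Del', pderiv_X]

theorem expDel'_X0 (hφ' : IsExpOf (fun p => u • Del' p) φ') :
    φ' (X 0) = C (u ^ 2) * X 4 ^ 2 * X 5 + (X 0 - C u * (2 * X 3 * X 4)) := by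
  rw [show (X 0 : MvPolynomial (Fin 6) k) = ![X 0, -(2 * X 3 * X 4), X 4 ^ 2 * X 5] 0 from rfl,
    hφ'.apply_eq_sum Del'_smul]
  · simp [Fin.sum_univ_succ, smul_eq_C_mul]
    ring
  · intro i
    fin_cases i
    · simp [Del', pderiv_X]
    · simp [Del', pderiv_X, pderiv_ofNat]
      ring
  · simp [Del', pderiv_X]

theorem expDel'_X1 (hφ' : IsExpOf (fun p => u • Del' p) φ') :
    φ' (X 1) = C (-u ^ 4) * X 4 ^ 3 * X 5 ^ 2 + (X 1 + C u * (4 * X 0 * X 3 - X 5)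
      - C (u ^ 2) * (4 * X 3 ^ 2 * X 4 + 2 * X 0 * X 4 * X 5)
      + C (u ^ 3) * (4 * X 3 * X 4 ^ 2 * X 5)) := by
  rw [show (X 1 : MvPolynomial (Fin 6) k) = ![X 1, 4 * X 0 * X 3 - X 5,
      -(4 * X 3 ^ 2 * X 4 + 2 * X 0 * X 4 * X 5), 4 * X 3 * X 4 ^ 2 * X 5,
      -(X 4 ^ 3 * X 5 ^ 2)] 0 from rfl,
    hφ'.apply_eq_sum Del'_smul]
  · simp [Fin.sum_univ_succ, smul_eq_C_mul]
    ring
  · intro i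
    fin_cases i <;> simp [Del', pderiv_X, pderiv_ofNat, nsmul_eq_mul] <;> ring
  · simp [Del', pderiv_X]

theorem expDel'_X2 (hφ' : IsExpOf (fun p => u • Del' p) φ') :
    φ' (X 2) = C (u ^ 6) * X 4 ^ 4 * X 5 ^ 3 + (X 2 + C u * (6 * X 1 * X 3 + 2 * X 4 ^ 2)
      + C (u ^ 2) * (12 * X 0 * X 3 ^ 2 - 3 * X 3 * X 5 - 3 * X 1 * X 4 * X 5)
      + C (u ^ 3) * (2 * X 4 * X 5 ^ 2 - 8 * X 3 ^ 3 * X 4 - 12 * X 0 * X 3 * X 4 * X 5)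
      + C (u ^ 4) * (12 * X 3 ^ 2 * X 4 ^ 2 * X 5 + 3 * X 0 * X 4 ^ 2 * X 5 ^ 2)
      - C (u ^ 5) * (6 * X 3 * X 4 ^ 3 * X 5 ^ 2)) := by
  rw [show (X 2 : MvPolynomial (Fin 6) k) = ![X 2, 6 * X 1 * X 3 + 2 * X 4 ^ 2,
      12 * X 0 * X 3 ^ 2 - 3 * X 3 * X 5 - 3 * X 1 * X 4 * X 5,
      2 * X 4 * X 5 ^ 2 - 8 * X 3 ^ 3 * X 4 - 12 * X 0 * X 3 * X 4 * X 5,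
      12 * X 3 ^ 2 * X 4 ^ 2 * X 5 + 3 * X 0 * X 4 ^ 2 * X 5 ^ 2,
      -(6 * X 3 * X 4 ^ 3 * X 5 ^ 2), X 4 ^ 4 * X 5 ^ 3] 0 from rfl,
    hφ'.apply_eq_sum Del'_smul]
  · simp [Fin.sum_univ_succ, smul_eq_C_mul]
    ring
  · intro i
    fin_cases i <;> simp [Del', pderiv_X, pderiv_ofNat, nsmul_eq_mul] <;> ring
  · simp [Del', pderiv_X]

end Orbits

def lowerExps (γ δ : ℕ) : Set (Fin 6 →₀ ℕ) :=
  {m | Finsupp.weight w1 m ≤ γ ∧ Finsupp.weight w2 m ≤ δ ∧ m 5 < γ}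

theorem monomial_tfMon (γ δ : ℕ) (c : k) :
    monomial (tfMon γ δ) c = C c * X 4 ^ δ * X 5 ^ γ := by
  simp [tfMon, X_pow_eq_monomial, C_mul_monomial, monomial_mul]

theorem weight_w1_tfMon (γ δ : ℕ) : Finsupp.weight w1 (tfMon γ δ) = γ := by
  simp [tfMon, w1, Finsupp.weight_single]

theorem weight_w2_tfMon (γ δ : ℕ) : Finsupp.weight w2 (tfMon γ δ) = δ := by
  simp [tfMon, w2, Finsupp.weight_single]

theorem tfMon_apply_five (γ δ : ℕ) : tfMon γ δ 5 = γ := by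
  simp [tfMon]

theorem leading_add_mem_Pset {γ δ : ℕ} {c : k} (hc : c ≠ 0) {q : MvPolynomial (Fin 6) k}
    (hq : q ∈ restrictSupport k (lowerExps γ δ)) :
    C c * X 4 ^ δ * X 5 ^ γ + q ∈ Pset γ δ ∧
      coeff (tfMon γ δ) (C c * X 4 ^ δ * X 5 ^ γ + q) = c := by
  have hlow : ∀ m ∈ q.support, m ∈ lowerExps γ δ := fun m hm => hq hm
  have hq0 : coeff (tfMon γ δ) q = 0 :=
    notMem_support_iff.1 fun h => (hlow _ h).2.2.ne (tfMon_apply_five γ δ)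
  have hcoeff : coeff (tfMon γ δ) (C c * X 4 ^ δ * X 5 ^ γ + q) = c := by
    rw [← monomial_tfMon, coeff_add, coeff_monomial, if_pos rfl, hq0, add_zero]
  have hsupp : (C c * X 4 ^ δ * X 5 ^ γ + q).support ⊆ insert (tfMon γ δ) q.support := by
    rw [← monomial_tfMon]
    exact support_add.trans (Finset.union_subset_union_left support_monomial_subset)
  refine ⟨⟨fun h => hc (by rw [← hcoeff, h, coeff_zero]), ?_, ?_, ?_⟩, hcoeff⟩
  · refine Finset.sup_le fun m hm => ?_
    rcases Finset.mem_insert.1 (hsupp hm) with rfl | hm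
    · exact (weight_w1_tfMon γ δ).le
    · exact (hlow m hm).1
  · refine Finset.sup_le fun m hm => ?_
    rcases Finset.mem_insert.1 (hsupp hm) with rfl | hm
    · exact (weight_w2_tfMon γ δ).le
    · exact (hlow m hm).2.1
  · refine ⟨mem_support_iff.2 (by rw [hcoeff]; exact hc), fun m hm hne => Or.inl ?_⟩
    rcases Finset.mem_insert.1 (hsupp hm) with rfl | hm
    · exact absurd rfl hne
    · rw [tfMon_apply_five]
      exact (hlow m hm).2.2

section LeadingTermsOfOrbits

variable [CharZero k] {u : k} {φ' : MvPolynomial (Fin 6) k ≃ₐ[k] MvPolynomial (Fin 6) k}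

theorem expDel'_X0_mem_Pset (hu : u ≠ 0) (hφ' : IsExpOf (fun p => u • Del' p) φ') :
    φ' (X 0) ∈ Pset 1 2 ∧ coeff (tfMon 1 2) (φ' (X 0)) = u ^ 2 := by
  rw [expDel'_X0 hφ', ← pow_one (X 5 : MvPolynomial (Fin 6) k)]
  refine leading_add_mem_Pset (pow_ne_zero _ hu) ?_
  simp only [← map_ofNat C, ← mul_assoc, X, monomial_mul, C_mul_monomial]
  repeat' first | apply add_mem | apply sub_mem
  all_goals simp [lowerExps, w1, w2, Finsupp.weight_single]

theorem expDel'_X1_mem_Pset (hu : u ≠ 0) (hφ' : IsExpOf (fun p => u • Del' p) φ') :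
    φ' (X 1) ∈ Pset 2 3 ∧ coeff (tfMon 2 3) (φ' (X 1)) = -u ^ 4 := by
  rw [expDel'_X1 hφ']
  refine leading_add_mem_Pset (neg_ne_zero.2 (pow_ne_zero _ hu)) ?_
  simp only [mul_add, mul_sub, ← map_ofNat C, ← mul_assoc, X, monomial_pow, monomial_mul,
    C_mul_monomial]
  repeat' first | apply add_mem | apply sub_mem
  all_goals simp [lowerExps, w1, w2, Finsupp.weight_single]

theorem expDel'_X2_mem_Pset (hu : u ≠ 0) (hφ' : IsExpOf (fun p => u • Del' p) φ') :
    φ' (X 2) ∈ Pset 3 4 ∧ coeff (tfMon 3 4) (φ' (X 2)) = u ^ 6 := by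
  rw [expDel'_X2 hφ']
  refine leading_add_mem_Pset (pow_ne_zero _ hu) ?_
  simp only [mul_add, mul_sub, ← map_ofNat C, ← mul_assoc, X, monomial_pow, monomial_mul,
    C_mul_monomial]
  repeat' first | apply add_mem | apply sub_mem
  all_goals simp [lowerExps, w1, w2, Finsupp.weight_single]

end LeadingTermsOfOrbits

theorem statement9_general [CharZero k]
    (u : k) (hu : u ≠ 0)
    (φ' : MvPolynomial (Fin 6) k ≃ₐ[k] MvPolynomial (Fin 6) k)
    (hφ' : IsExpOf (fun p => u • Del' p) φ') :
    φ' (X 3) = X 3 - C u * (X 4 * X 5) ∧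
    φ' (X 4) = X 4 ∧
    φ' (X 5) = X 5 ∧
    ∀ j : Fin 3, φ' (X (ι36 j)) ∈ Pset ((j : ℕ) + 1) ((j : ℕ) + 2) ∧
      coeff (tfMon ((j : ℕ) + 1) ((j : ℕ) + 2)) (φ' (X (ι36 j)))
        = (-1 : k) ^ (j : ℕ) * u ^ (2 * ((j : ℕ) + 1)) := by
  refine ⟨expDel'_X3 hφ', expDel'_X4 hφ', expDel'_X5 hφ', fun j => ?_⟩
  fin_cases j
  · simpa [ι36] using expDel'_X0_mem_Pset hu hφ'
  · simpa [ι36] using expDel'_X1_mem_Pset hu hφ'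
  · simpa [ι36] using expDel'_X2_mem_Pset hu hφ'

/-- `φ'_u(t_r) = t_r - u t_f t_g`, `φ'_u(t_f) = t_f`,
`φ'_u(t_g) = t_g`, and `φ'_u(x_i) ∈ P_{i,i+1}` with leading term
`(-1)^{i+1} u^{2i} t_f^{i+1} t_g^i` for `i = 1,2,3`. -/
theorem statement9 [CharZero k]
    (hln6 : ∀ p : MvPolynomial (Fin 6) k, ∃ l : ℕ, Del'^[l] p = 0)
    (u : k) (hu : u ≠ 0)
    (φ' : MvPolynomial (Fin 6) k ≃ₐ[k] MvPolynomial (Fin 6) k)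
    (hφ' : IsExpOf (fun p => u • Del' p) φ') :
    φ' (X 3) = X 3 - C u * (X 4 * X 5) ∧
    φ' (X 4) = X 4 ∧
    φ' (X 5) = X 5 ∧
    ∀ j : Fin 3, φ' (X (ι36 j)) ∈ Pset ((j : ℕ) + 1) ((j : ℕ) + 2) ∧
      coeff (tfMon ((j : ℕ) + 1) ((j : ℕ) + 2)) (φ' (X (ι36 j)))
        = (-1 : k) ^ (j : ℕ) * u ^ (2 * ((j : ℕ) + 1)) :=
  statement9_general u hu φ' hφ'

end YasudaPaper
end
end

section
/- Every θ ∈ ⟨φ, Aff_3(k)⟩ \ Aff_3(k) can be written as θ = α_0 ∘ φ_{u_1} ∘ α_1 ∘ φ_{u_2} ∘ ··· ∘ φ_{u_{s-1}} ∘ α_{s-1} ∘ φ_{u_s} ∘ α_s, where s ≥ 1, u_1,...,u_s ∈ k^*, α_0, α_s ∈ Aff_3(k), and α_1,...,α_{s-1} ∈ Aff_3(k) \ B. -/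
/-! The exponentials `φ_u = exp (uΔ)` form a one-parameter group, and `Δ` is homogeneous of
degree `7 = 4 + 9 - (3 + 2 + 1)` for the weights `(3, 2, 1)` of `(x1, x2, x3)`, since `f` and `g`
have weights `4` and `9`; hence `β_v φ_u = φ_{v^7 u} β_v`. So an element `φ_t` meeting a reduced
word `α_0 φ_{u_1} α_1 ⋯` with `α_0 ∈ B` on its left passes through `α_0` and merges with
`φ_{u_1}`; if the merged parameter vanishes, `α_0` merges with `α_1` instead. Building elements of
`⟨φ, Aff_3(k)⟩` one generator at a time from the left therefore only ever produces reduced words,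
and a reduced word with no `φ` at all is affine. -/

open MvPolynomial

noncomputable section

namespace YasudaPaper

variable {k : Type*} [Field k]

section ReducedWord

variable {G A : Type*} [Group G] [AddGroup A] (ψ : AddChar A G) (H : Subgroup G) (B : Set G)

-- `wordProd ψ [(α₀, u₁), …, (αₛ₋₁, uₛ)] a = α₀ ψ(u₁) α₁ ⋯ αₛ₋₁ ψ(uₛ) a`
def wordProd (L : List (G × A)) (a : G) : G := (L.map fun p => p.1 * ψ p.2).prod * a

def IsReducedWord (L : List (G × A)) (a : G) : Prop :=
  (∀ p ∈ L, p.1 ∈ H ∧ p.2 ≠ 0) ∧ a ∈ H ∧ ∀ p ∈ L.tail, p.1 ∉ B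

def reducedWordProds : Set G := {θ | ∃ L a, IsReducedWord H B L a ∧ wordProd ψ L a = θ}

variable {ψ H B}

@[simp] lemma wordProd_nil (a : G) : wordProd ψ [] a = a := by simp [wordProd]

lemma wordProd_cons (p : G × A) (L : List (G × A)) (a : G) :
    wordProd ψ (p :: L) a = p.1 * ψ p.2 * wordProd ψ L a := by
  simp [wordProd, mul_assoc]

lemma isReducedWord_cons {p : G × A} {L : List (G × A)} {a : G} :
    IsReducedWord H B (p :: L) a ↔
      p.1 ∈ H ∧ p.2 ≠ 0 ∧ IsReducedWord H B L a ∧ ∀ q ∈ L.head?, q.1 ∉ B := by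
  rcases L with _ | ⟨q, L⟩ <;>
    simp only [IsReducedWord, List.mem_cons, List.not_mem_nil, or_false, forall_eq,
      forall_eq_or_imp, List.tail_cons, List.tail_nil, List.head?_nil, List.head?_cons,
      Option.mem_def, Option.some.injEq, forall_eq', reduceCtorEq, IsEmpty.forall_iff,
      implies_true, and_true, true_and] <;>
    tauto

lemma one_mem_reducedWordProds : (1 : G) ∈ reducedWordProds ψ H B :=
  ⟨[], 1, ⟨by simp, H.one_mem, by simp⟩, by simp⟩

lemma mul_mem_reducedWordProds_of_mem {γ θ : G} (hγ : γ ∈ H)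
    (hθ : θ ∈ reducedWordProds ψ H B) : γ * θ ∈ reducedWordProds ψ H B := by
  obtain ⟨L, a, hLa, rfl⟩ := hθ
  rcases L with _ | ⟨⟨α, u⟩, L⟩
  · exact ⟨[], γ * a, ⟨by simp, H.mul_mem hγ hLa.2.1, by simp⟩, by simp⟩
  · rw [isReducedWord_cons] at hLa
    refine ⟨(γ * α, u) :: L, a, isReducedWord_cons.2 ⟨H.mul_mem hγ hLa.1, hLa.2⟩, ?_⟩
    simp only [wordProd_cons, mul_assoc]

lemma apply_mul_mem_reducedWordProds (hB : ∀ β ∈ B, ∀ t, ∃ t', ψ t * β = β * ψ t') (t : A)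
    {θ : G} (hθ : θ ∈ reducedWordProds ψ H B) : ψ t * θ ∈ reducedWordProds ψ H B := by
  obtain ⟨L, a, hLa, rfl⟩ := hθ
  by_cases ht : t = 0
  · rw [ht, AddChar.map_zero_eq_one, one_mul]; exact ⟨L, a, hLa, rfl⟩
  rcases L with _ | ⟨⟨α, u⟩, L⟩
  · exact ⟨[(1, t)], a, ⟨by simp [H.one_mem, ht], hLa.2.1, by simp⟩, by simp [wordProd_cons]⟩
  obtain ⟨hα, hu, hL, -⟩ := isReducedWord_cons.1 hLa
  by_cases hαB : α ∈ B
  · obtain ⟨t', ht'⟩ := hB α hαB t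
    have hmerge : ψ t * wordProd ψ ((α, u) :: L) a = wordProd ψ ((α, t' + u) :: L) a := by
      rw [wordProd_cons, wordProd_cons, AddChar.map_add_eq_mul, ← mul_assoc, ← mul_assoc, ht',
        mul_assoc α]
    by_cases htu : t' + u = 0
    · rw [hmerge, wordProd_cons, htu, AddChar.map_zero_eq_one, mul_one]
      exact mul_mem_reducedWordProds_of_mem hα ⟨L, a, hL, rfl⟩
    · refine ⟨(α, t' + u) :: L, a, isReducedWord_cons.2 ⟨hα, htu, hL, ?_⟩, hmerge.symm⟩
      exact (isReducedWord_cons.1 hLa).2.2.2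
  · refine ⟨(1, t) :: (α, u) :: L, a, isReducedWord_cons.2 ⟨H.one_mem, ht, hLa, by simpa⟩, ?_⟩
    rw [wordProd_cons (1, t), one_mul]

lemma closure_subset_reducedWordProds (hB : ∀ β ∈ B, ∀ t, ∃ t', ψ t * β = β * ψ t') :
    (Subgroup.closure (Set.range ψ ∪ H) : Set G) ⊆ reducedWordProds ψ H B := by
  intro θ hθ
  induction hθ using Subgroup.closure_induction_left with
  | one => exact one_mem_reducedWordProds
  | mul_left x hx y _ hy =>
    rcases hx with ⟨t, rfl⟩ | hx
    · exact apply_mul_mem_reducedWordProds hB t hy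
    · exact mul_mem_reducedWordProds_of_mem hx hy
  | inv_mul_cancel x hx y _ hy =>
    rcases hx with ⟨t, rfl⟩ | hx
    · rw [← AddChar.map_neg_eq_inv]; exact apply_mul_mem_reducedWordProds hB (-t) hy
    · exact mul_mem_reducedWordProds_of_mem (H.inv_mem hx) hy

lemma IsReducedWord.exists_ofFn_form {L : List (G × A)} {a : G} (h : IsReducedWord H B L a)
    (hL : L ≠ []) :
    ∃ s : ℕ, 1 ≤ s ∧ ∃ (u : Fin s → A) (α : Fin (s + 1) → G),
      (∀ i, u i ≠ 0) ∧ α 0 ∈ H ∧ α (Fin.last s) ∈ H ∧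
      (∀ i : Fin (s + 1), 0 < (i : ℕ) → (i : ℕ) < s → α i ∈ H ∧ α i ∉ B) ∧
      wordProd ψ L a = (List.ofFn fun i : Fin s => α i.castSucc * ψ (u i)).prod * α (Fin.last s) := by
  obtain ⟨hLH, ha, hB⟩ := h
  set α : Fin (L.length + 1) → G := Fin.snoc (fun i => (L.get i).1) a
  have hαH : ∀ i, α i ∈ H := Fin.lastCases (by simpa [α] using ha)
    fun i => by simpa [α] using (hLH _ (L.get_mem i)).1
  refine ⟨L.length, List.length_pos_iff.2 hL, fun i => (L.get i).2, α,
    fun i => (hLH _ (L.get_mem i)).2, hαH 0, hαH _, fun i hi0 his => ⟨hαH i, ?_⟩, ?_⟩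
  · obtain ⟨j, rfl⟩ : ∃ j : Fin L.length, i = j.castSucc := ⟨⟨i, his⟩, rfl⟩
    simp only [α, Fin.snoc_castSucc]
    rw [Fin.val_castSucc] at hi0
    have hj : L.get j = L.tail[(j : ℕ) - 1]'(by rw [List.length_tail]; omega) := by
      simp only [List.getElem_tail, List.get_eq_getElem]
      congr
      omega
    exact hB _ (hj ▸ List.getElem_mem _)
  · simp only [α, Fin.snoc_castSucc, Fin.snoc_last, wordProd, List.get_eq_getElem,
      List.ofFn_getElem_eq_map (f := fun p : G × A => p.1 * ψ p.2)]

end ReducedWord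

open Finset Nat

lemma sum_range_succ_pow_div_factorial [CharZero k] (u v : k) (n : ℕ) :
    ∑ j ∈ range (n + 1), (u ^ j / j ! ) * (v ^ (n - j) / (n - j) !) = (u + v) ^ n / n ! := by
  have := congrArg (PowerSeries.coeff n) (PowerSeries.exp_mul_exp_eq_exp_add u v)
  simpa [PowerSeries.coeff_mul, Nat.sum_antidiagonal_eq_sum_range_succ_mk, div_eq_mul_inv,
    mul_comm, mul_left_comm, mul_assoc] using this

section Exp

variable {σ : Type*} {D : MvPolynomial σ k →ₗ[k] MvPolynomial σ k}

lemma iterate_smul_apply (u : k) (i : ℕ) (h : MvPolynomial σ k) :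
    (fun h => u • D h)^[i] h = u ^ i • D^[i] h := by
  induction i with
  | zero => simp
  | succ i ih => rw [Function.iterate_succ_apply', Function.iterate_succ_apply', ih, map_smul,
      smul_smul, _root_.pow_succ']

variable {u : k} {e : MvPolynomial σ k ≃ₐ[k] MvPolynomial σ k}

lemma IsExpOf.apply_eq_sum_s12 (he : IsExpOf (fun h => u • D h) e) {h : MvPolynomial σ k} {N : ℕ}
    (hN : D^[N] h = 0) : e h = ∑ i ∈ range N, (u ^ i / i !) • D^[i] h := by
  rw [he h N (by rw [iterate_smul_apply, hN, smul_zero])]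
  refine sum_congr rfl fun i _ => ?_
  rw [iterate_smul_apply, smul_smul, inv_mul_eq_div]

lemma apply_iterate_eq_smul {E : MvPolynomial σ k ≃ₐ[k] MvPolynomial σ k} {c : k}
    (hE : ∀ h, E (D h) = c • D (E h)) (i : ℕ) (h : MvPolynomial σ k) :
    E (D^[i] h) = c ^ i • D^[i] (E h) := by
  induction i with
  | zero => simp
  | succ i ih => rw [Function.iterate_succ_apply', Function.iterate_succ_apply', hE, ih,
      map_smul, smul_smul, _root_.pow_succ']

variable {Φ : k → MvPolynomial σ k ≃ₐ[k] MvPolynomial σ k}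
  (hln : ∀ h : MvPolynomial σ k, ∃ N, D^[N] h = 0) (hΦ : ∀ u, IsExpOf (fun h => u • D h) (Φ u))
include hln hΦ

lemma isExpOf_add [CharZero k] (u v : k) : Φ (u + v) = Φ u * Φ v := by
  ext1 h
  obtain ⟨N, hN⟩ := hln h
  symm
  calc Φ u (Φ v h)
      = ∑ i ∈ range N, ∑ j ∈ range (N - i), (v ^ i / i ! * (u ^ j / j !)) • D^[i + j] h := by
        rw [(hΦ v).apply_eq_sum_s12 hN, map_sum]
        refine sum_congr rfl fun i hi => ?_
        have hi : D^[N - i] (D^[i] h) = 0 := by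
          rw [← Function.iterate_add_apply, Nat.sub_add_cancel (mem_range.1 hi).le, hN]
        simp only [map_smul, (hΦ u).apply_eq_sum_s12 hi, smul_sum, smul_smul,
          ← Function.iterate_add_apply, add_comm]
    _ = ∑ n ∈ range N, ∑ j ∈ range (n + 1), (v ^ j / j ! * (u ^ (n - j) / (n - j) !)) • D^[n] h := by
        rw [← sum_range_diag_flip]
        refine sum_congr rfl fun n _ => sum_congr rfl fun j hj => ?_
        rw [Nat.add_sub_cancel' (mem_range_succ_iff.1 hj)]
    _ = Φ (u + v) h := by
        simp only [← sum_smul, sum_range_succ_pow_div_factorial, add_comm v u]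
        exact ((hΦ (u + v)).apply_eq_sum_s12 hN).symm

def expAddChar [CharZero k] : AddChar k (MvPolynomial σ k ≃ₐ[k] MvPolynomial σ k) where
  toFun := Φ
  map_zero_eq_one' := by simpa using isExpOf_add hln hΦ 0 0
  map_add_eq_mul' := isExpOf_add hln hΦ

lemma isExpOf_conj {E : MvPolynomial σ k ≃ₐ[k] MvPolynomial σ k} {c : k} (hc : c ≠ 0)
    (hE : ∀ h, E (D h) = c • D (E h)) (u : k) : E * Φ u = Φ (c * u) * E := by
  ext1 h
  obtain ⟨N, hN⟩ := hln h
  have hEN : D^[N] (E h) = 0 := by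
    have := apply_iterate_eq_smul hE N h
    rwa [hN, map_zero, eq_comm, smul_eq_zero, or_iff_right (pow_ne_zero N hc)] at this
  simp only [AlgEquiv.mul_apply, (hΦ u).apply_eq_sum_s12 hN, (hΦ (c * u)).apply_eq_sum_s12 hEN, map_sum,
    map_smul, apply_iterate_eq_smul hE, smul_smul]
  refine sum_congr rfl fun i _ => ?_
  ring_nf

end Exp

def jacobianDerivation (f g : MvPolynomial (Fin 3) k) :
    Derivation k (MvPolynomial (Fin 3) k) (MvPolynomial (Fin 3) k) where
  toFun h := Matrix.det !![pderiv 0 f, pderiv 1 f, pderiv 2 f;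
                           pderiv 0 g, pderiv 1 g, pderiv 2 g;
                           pderiv 0 h, pderiv 1 h, pderiv 2 h]
  map_add' p q := by
    simp only [map_add, Matrix.det_fin_three, Matrix.of_apply, Matrix.cons_val', Matrix.cons_val,
      Matrix.cons_val_zero, Matrix.cons_val_one, Matrix.cons_val_fin_one]
    ring
  map_smul' c p := by
    simp only [smul_eq_C_mul, Derivation.leibniz, smul_eq_mul, derivation_C, mul_zero, add_zero,
      Matrix.det_fin_three, Matrix.of_apply, Matrix.cons_val', Matrix.cons_val,
      Matrix.cons_val_zero, Matrix.cons_val_one, Matrix.cons_val_fin_one, RingHom.id_apply]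
    ring
  map_one_eq_zero' := by simp [Matrix.det_fin_three]
  leibniz' p q := by
    simp only [LinearMap.coe_mk, AddHom.coe_mk, Derivation.leibniz, smul_eq_mul,
      Matrix.det_fin_three, Matrix.of_apply, Matrix.cons_val', Matrix.cons_val,
      Matrix.cons_val_zero, Matrix.cons_val_one, Matrix.cons_val_fin_one]
    ring

lemma Del_eq_jacobianDerivation (h : MvPolynomial (Fin 3) k) :
    Del h = jacobianDerivation fP gP h :=
  rfl

lemma IsBeta.apply_Del_X {v : k} {β : MvPolynomial (Fin 3) k ≃ₐ[k] MvPolynomial (Fin 3) k}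
    (hβ : IsBeta v β) (j : Fin 3) : β (Del (X j)) = v ^ 7 • Del (β (X j)) := by
  obtain ⟨h0, h1, h2⟩ := hβ
  have hd (i : Fin 3) : pderiv i (2 : MvPolynomial (Fin 3) k) = 0 := by
    exact_mod_cast (pderiv i).map_natCast 2
  fin_cases j <;>
  simp [Del, Matrix.det_fin_three, fP, gP, h0, h1, h2, pderiv_X, hd, map_ofNat β, smul_eq_C_mul] <;>
  ring

lemma IsBeta.apply_Del {v : k} {β : MvPolynomial (Fin 3) k ≃ₐ[k] MvPolynomial (Fin 3) k}
    (hβ : IsBeta v β) (h : MvPolynomial (Fin 3) k) : β (Del h) = v ^ 7 • Del (β h) := by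
  induction h using MvPolynomial.induction_on with
  | C a => simp only [Del_eq_jacobianDerivation, ← algebraMap_eq, AlgEquiv.commutes,
      Derivation.map_algebraMap, map_zero, smul_zero]
  | add p q hp hq => simp only [Del_eq_jacobianDerivation, map_add, smul_add] at *; rw [hp, hq]
  | mul_X p j hp =>
    have hX := hβ.apply_Del_X j
    simp only [Del_eq_jacobianDerivation, map_mul, Derivation.leibniz, map_add, smul_eq_mul,
      smul_add] at *
    rw [hp, hX, mul_smul_comm, mul_smul_comm]

section Affine

variable {α : MvPolynomial (Fin 3) k ≃ₐ[k] MvPolynomial (Fin 3) k}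
  {A : Matrix (Fin 3) (Fin 3) k} {b : Fin 3 → k}

lemma apply_affine_of_apply_X (hα : ∀ i, α (X i) = (∑ j, C (A j i) * X j) + C (b i))
    (A' : Matrix (Fin 3) (Fin 3) k) (b' : Fin 3 → k) (i : Fin 3) :
    α ((∑ j, C (A' j i) * X j) + C (b' i))
      = (∑ j, C ((A * A') j i) * X j) + C ((∑ j, A' j i * b j) + b' i) := by
  have hC (a : k) : α (C a) = C a := α.commutes a
  simp only [map_add, map_mul, hC, hα, Matrix.mul_apply, Fin.sum_univ_three]
  ring

lemma sum_one_apply_mul_X (i : Fin 3) :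
    ∑ j, C ((1 : Matrix (Fin 3) (Fin 3) k) j i) * X j = X i := by
  simp [Matrix.one_apply]

def affineSubgroup : Subgroup (MvPolynomial (Fin 3) k ≃ₐ[k] MvPolynomial (Fin 3) k) where
  carrier := AffSet
  one_mem' := ⟨1, 0, by simp, fun i => by simp [sum_one_apply_mul_X]⟩
  mul_mem' := by
    rintro α γ ⟨A, b, hA, hα⟩ ⟨A', b', hA', hγ⟩
    exact ⟨A * A', fun i => (∑ j, A' j i * b j) + b' i, by rw [Matrix.det_mul]; exact hA.mul hA',
      fun i => by rw [AlgEquiv.mul_apply, hγ, apply_affine_of_apply_X hα]⟩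
  inv_mem' := by
    rintro α ⟨A, b, hA, hα⟩
    refine ⟨A⁻¹, fun i => -∑ j, A⁻¹ j i * b j, Matrix.isUnit_nonsing_inv_det A hA, fun i => ?_⟩
    have h : α ((∑ j, C (A⁻¹ j i) * X j) + C (-∑ j, A⁻¹ j i * b j)) = X i := by
      rw [apply_affine_of_apply_X hα A⁻¹ (fun i => -∑ j, A⁻¹ j i * b j),
        Matrix.mul_nonsing_inv A hA, sum_one_apply_mul_X, add_neg_cancel, C_0, add_zero]
    rw [← h]
    exact α.symm_apply_apply _

lemma mem_affineSubgroup : α ∈ affineSubgroup ↔ IsAffine α := Iff.rfl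

end Affine

lemma exists_apply_mul_eq_mul_apply_of_mem_BSet
    (hln : ∀ h : MvPolynomial (Fin 3) k, ∃ l : ℕ, Del^[l] h = 0)
    {Φ : k → (MvPolynomial (Fin 3) k ≃ₐ[k] MvPolynomial (Fin 3) k)}
    (hΦ : ∀ u : k, IsExpOf (fun h => u • Del h) (Φ u))
    {β : MvPolynomial (Fin 3) k ≃ₐ[k] MvPolynomial (Fin 3) k} (hβ : β ∈ BSet) (t : k) :
    ∃ t', Φ t * β = β * Φ t' := by
  obtain ⟨v, hv, hβ⟩ := hβ
  have hv7 : v ^ 7 ≠ 0 := pow_ne_zero 7 hv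
  refine ⟨t / v ^ 7, ?_⟩
  rw [isExpOf_conj (D := (jacobianDerivation fP gP).toLinearMap) hln hΦ hv7 hβ.apply_Del,
    mul_div_cancel₀ t hv7]

/-- Every `θ ∈ ⟨φ, Aff_3(k)⟩ \ Aff_3(k)` can be written as
`θ = α_0 ∘ φ_{u_1} ∘ α_1 ∘ ⋯ ∘ α_{s-1} ∘ φ_{u_s} ∘ α_s` with `s ≥ 1`,
`u_1,…,u_s ∈ k^*`, `α_0, α_s ∈ Aff_3(k)` and `α_1,…,α_{s-1} ∈ Aff_3(k) \ B`. -/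
theorem statement12 [CharZero k]
    (hln : ∀ h : MvPolynomial (Fin 3) k, ∃ l : ℕ, Del^[l] h = 0)
    (Φ : k → (MvPolynomial (Fin 3) k ≃ₐ[k] MvPolynomial (Fin 3) k))
    (hΦ : ∀ u : k, IsExpOf (fun h => u • Del h) (Φ u))
    (θ : MvPolynomial (Fin 3) k ≃ₐ[k] MvPolynomial (Fin 3) k)
    (hθ : θ ∈ Subgroup.closure ({Φ 1} ∪ AffSet))
    (hθA : ¬ IsAffine θ) :
    ∃ s : ℕ, 1 ≤ s ∧
      ∃ (u : Fin s → k) (α : Fin (s + 1) → (MvPolynomial (Fin 3) k ≃ₐ[k] MvPolynomial (Fin 3) k)),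
        (∀ i, u i ≠ 0) ∧
        IsAffine (α 0) ∧ IsAffine (α (Fin.last s)) ∧
        (∀ i : Fin (s + 1), 0 < (i : ℕ) → (i : ℕ) < s → IsAffine (α i) ∧ α i ∉ BSet) ∧
        θ = (List.ofFn fun i : Fin s => α i.castSucc * Φ (u i)).prod * α (Fin.last s) := by
  have hln' : ∀ h, ∃ l, (⇑(jacobianDerivation fP gP).toLinearMap)^[l] h = 0 := hln
  have hΦ' : ∀ u, IsExpOf (fun h => u • (jacobianDerivation fP gP).toLinearMap h) (Φ u) := hΦ
  let ψ := expAddChar hln' hΦ'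
  have hB : ∀ β ∈ BSet, ∀ t, ∃ t', ψ t * β = β * ψ t' := fun β hβ t =>
    exists_apply_mul_eq_mul_apply_of_mem_BSet hln hΦ hβ t
  have hgen : {Φ 1} ∪ AffSet ⊆ Set.range ψ ∪ (affineSubgroup (k := k) : Set _) := by
    refine Set.union_subset_union ?_ fun _ h => h
    rintro _ rfl
    exact ⟨1, rfl⟩
  obtain ⟨L, a, hLa, rfl⟩ := closure_subset_reducedWordProds hB (Subgroup.closure_mono hgen hθ)
  rcases eq_or_ne L [] with rfl | hL
  · exact absurd (mem_affineSubgroup.1 hLa.2.1) (by simpa using hθA)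
  · exact hLa.exists_ofFn_form hL

end YasudaPaper
end
end
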